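/- Under the h-Randers conformal change, the Cartan tensor transforms as C̄_{ijk} = φ C_{ijk} + ((e^σ + ρ)/(2L)) (h_{ij} m_k + h_{jk} m_i + h_{ki} m_j), where C̄_{ijk} = (1/2) ∂_k ḡ_{ij}, C_{ijk} = (1/2) ∂_k g_{ij}, and all derivatives are with respect to y. -/

import Mathlib

/-- Partial derivative with respect to the i-th fiber coordinate y^i. -/
noncomputable def pd {n : ℕ} (i : Fin n) (f : (Fin n → ℝ) → ℝ) : (Fin n → ℝ) → ℝ :=
  fun y => fderiv ℝ f y (Pi.single i 1)

lemma contDiff_pd {n : ℕ} (i : Fin n) {f : (Fin n → ℝ) → ℝ} (hf : ContDiff ℝ (⊤ : ℕ∞) f) :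
    ContDiff ℝ (⊤ : ℕ∞) (pd i f) :=
  (hf.fderiv_right (by simp)).clm_apply contDiff_const

lemma pd_congr {n : ℕ} (i : Fin n) {f g : (Fin n → ℝ) → ℝ} (h : ∀ y, f y = g y) :
    pd i f = pd i g := by
  have : f = g := funext h
  rw [this]

lemma pd_add {n : ℕ} (i : Fin n) {f g : (Fin n → ℝ) → ℝ} {y : Fin n → ℝ}
    (hf : DifferentiableAt ℝ f y) (hg : DifferentiableAt ℝ g y) :
    pd i (fun z => f z + g z) y = pd i f y + pd i g y := by
  unfold pd; rw [fderiv_fun_add hf hg]; simp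

lemma pd_sub {n : ℕ} (i : Fin n) {f g : (Fin n → ℝ) → ℝ} {y : Fin n → ℝ}
    (hf : DifferentiableAt ℝ f y) (hg : DifferentiableAt ℝ g y) :
    pd i (fun z => f z - g z) y = pd i f y - pd i g y := by
  unfold pd; rw [fderiv_fun_sub hf hg]; simp

lemma pd_mul {n : ℕ} (i : Fin n) {f g : (Fin n → ℝ) → ℝ} {y : Fin n → ℝ}
    (hf : DifferentiableAt ℝ f y) (hg : DifferentiableAt ℝ g y) :
    pd i (fun z => f z * g z) y = pd i f y * g y + f y * pd i g y := by
  unfold pd; rw [fderiv_fun_mul hf hg]; simp [mul_comm]; ring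

lemma pd_const_mul {n : ℕ} (i : Fin n) (c : ℝ) {f : (Fin n → ℝ) → ℝ} {y : Fin n → ℝ}
    (hf : DifferentiableAt ℝ f y) :
    pd i (fun z => c * f z) y = c * pd i f y := by
  unfold pd; rw [fderiv_const_mul hf]; simp

lemma pd_inv {n : ℕ} (i : Fin n) {f : (Fin n → ℝ) → ℝ} {y : Fin n → ℝ}
    (hf : DifferentiableAt ℝ f y) (hne : f y ≠ 0) :
    pd i (fun z => (f z)⁻¹) y = -(pd i f y) / f y ^ 2 := by
  unfold pd
  have : HasFDerivAt (fun z => (f z)⁻¹) ((-((f y) ^ 2)⁻¹) • fderiv ℝ f y) y := by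
    have h1 := (hasDerivAt_inv hne).comp_hasFDerivAt y hf.hasFDerivAt
    exact h1
  rw [this.fderiv]
  simp [div_eq_mul_inv]; ring

lemma pd_comm {n : ℕ} {f : (Fin n → ℝ) → ℝ} (hf : ContDiff ℝ (⊤ : ℕ∞) f) (i j : Fin n)
    (y : Fin n → ℝ) : pd i (pd j f) y = pd j (pd i f) y := by
  have hsym : IsSymmSndFDerivAt ℝ f y :=
    (hf.contDiffAt).isSymmSndFDerivAt (by rw [minSmoothness_of_isRCLikeNormedField]; exact WithTop.coe_le_coe.mpr (le_top : (2 : ℕ∞) ≤ ⊤))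
  have hd : DifferentiableAt ℝ (fderiv ℝ f) y :=
    ((hf.fderiv_right (m := (⊤ : ℕ∞)) (by simp)).differentiable (by simp)) y
  have key : ∀ u : Fin n → ℝ,
      fderiv ℝ (fun z => fderiv ℝ f z u) y =
        (fderiv ℝ (fderiv ℝ f) y).flip u := by
    intro u
    have := fderiv_clm_apply hd (differentiableAt_const u)
    simpa using this
  show fderiv ℝ (fun z => fderiv ℝ f z (Pi.single j 1)) y (Pi.single i 1)
      = fderiv ℝ (fun z => fderiv ℝ f z (Pi.single i 1)) y (Pi.single j 1)
  rw [key, key]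
  exact hsym _ _

/-- Under the h-Randers conformal change the Cartan tensor transforms as
C̄_{ijk} = φ C_{ijk} + ((e^σ+ρ)/(2L))(h_{ij} m_k + h_{jk} m_i + h_{ki} m_j). -/
theorem stmt_7 {n : ℕ} (L β Lb : (Fin n → ℝ) → ℝ) (σ ρ : ℝ)
    (b : Fin n → (Fin n → ℝ) → ℝ)
    (hLs : ContDiff ℝ (⊤ : ℕ∞) L) (hβs : ContDiff ℝ (⊤ : ℕ∞) β)
    (hLpos : ∀ y, 0 < L y)
    (hβb : ∀ i y, pd i β y = b i y)
    (g : Fin n → Fin n → (Fin n → ℝ) → ℝ)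
    (hg : ∀ i j, g i j = pd i (pd j (fun y => L y ^ 2 / 2)))
    (h : Fin n → Fin n → (Fin n → ℝ) → ℝ)
    (hh : ∀ i j y, h i j y = g i j y - pd i L y * pd j L y)
    (hb : ∀ i j y, pd j (b i) y = (ρ / L y) * h i j y)
    (hLb : Lb = fun y => Real.exp σ * L y + β y)
    (C : Fin n → Fin n → Fin n → (Fin n → ℝ) → ℝ)
    (hC : ∀ i j k y, C i j k y = pd k (g i j) y / 2)
    (gbar : Fin n → Fin n → (Fin n → ℝ) → ℝ)
    (hgbar : ∀ i j, gbar i j = pd i (pd j (fun y => Lb y ^ 2 / 2)))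
    (Cbar : Fin n → Fin n → Fin n → (Fin n → ℝ) → ℝ)
    (hCbar : ∀ i j k y, Cbar i j k y = pd k (gbar i j) y / 2)
    (m : Fin n → (Fin n → ℝ) → ℝ)
    (hm : ∀ i y, m i y = b i y - (β y / L y) * pd i L y)
    (φ : (Fin n → ℝ) → ℝ)
    (hφ : ∀ y, φ y = (L y)⁻¹ * Lb y * (Real.exp σ + ρ))
    (i j k : Fin n) (y : Fin n → ℝ) :
    Cbar i j k y = φ y * C i j k y
      + ((Real.exp σ + ρ) / (2 * L y))
        * (h i j y * m k y + h j k y * m i y + h k i y * m j y) := by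

  set e := Real.exp σ with he
  have hLne : ∀ z, L z ≠ 0 := fun z => (hLpos z).ne'
  -- smoothness facts
  have hbs : ∀ a, ContDiff ℝ (⊤ : ℕ∞) (b a) := by
    intro a
    have hba : b a = pd a β := funext fun z => (hβb a z).symm
    rw [hba]; exact contDiff_pd a hβs
  have hLbs : ContDiff ℝ (⊤ : ℕ∞) Lb := by
    rw [hLb]; exact (contDiff_const.mul hLs).add hβs
  have hF2s : ContDiff ℝ (⊤ : ℕ∞) (fun z => L z ^ 2 / 2) := (hLs.pow 2).div_const 2
  have hgs : ∀ a c, ContDiff ℝ (⊤ : ℕ∞) (g a c) := fun a c => by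
    rw [hg]; exact contDiff_pd a (contDiff_pd c hF2s)
  have hhs : ∀ a c, ContDiff ℝ (⊤ : ℕ∞) (h a c) := fun a c => by
    have hfun : h a c = fun z => g a c z - pd a L z * pd c L z := funext (hh a c)
    rw [hfun]
    exact (hgs a c).sub ((contDiff_pd a hLs).mul (contDiff_pd c hLs))
  -- differentiability shorthands
  have dL : ∀ z, DifferentiableAt ℝ L z := fun z => hLs.differentiable (by simp) z
  have dpL : ∀ a z, DifferentiableAt ℝ (pd a L) z :=
    fun a z => (contDiff_pd a hLs).differentiable (by simp) z
  have db : ∀ a z, DifferentiableAt ℝ (b a) z := fun a z => (hbs a).differentiable (by simp) z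
  have dLb : ∀ z, DifferentiableAt ℝ Lb z := fun z => hLbs.differentiable (by simp) z
  have dg : ∀ a c z, DifferentiableAt ℝ (g a c) z :=
    fun a c z => (hgs a c).differentiable (by simp) z
  have dh : ∀ a c z, DifferentiableAt ℝ (h a c) z :=
    fun a c z => (hhs a c).differentiable (by simp) z
  have dLinv : ∀ z, DifferentiableAt ℝ (fun w => (L w)⁻¹) z := fun z => (dL z).inv (hLne z)
  have dhh : ∀ a c z, DifferentiableAt ℝ (fun w => h a c w - pd a L w * pd c L w) z :=
    fun a c z => ((dh a c z).sub ((dpL a z).mul (dpL c z)))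
  -- pd of f^2/2
  have hsq : ∀ {f : (Fin n → ℝ) → ℝ}, ContDiff ℝ (⊤ : ℕ∞) f → ∀ (a : Fin n) (z : Fin n → ℝ),
      pd a (fun w => f w ^ 2 / 2) z = f z * pd a f z := by
    intro f hf a z
    have h1 : (fun w => f w ^ 2 / 2) = fun w => (1/2 : ℝ) * (f w * f w) := by
      funext w; ring
    have df := hf.differentiable (by simp)
    rw [h1, pd_const_mul a _ ((df z).fun_mul (df z)), pd_mul a (df z) (df z)]
    ring
  -- I1 : structure of g
  have I1 : ∀ a c z, g a c z = pd a L z * pd c L z + L z * pd a (pd c L) z := by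
    intro a c z
    rw [hg, pd_congr a (fun w => hsq hLs c w)]
    exact pd_mul a (dL z) (dpL c z)
  -- I2 : second derivative of L
  have I2 : ∀ a c z, pd a (pd c L) z = h a c z * (L z)⁻¹ := by
    intro a c z
    have e1 : h a c z = L z * pd a (pd c L) z := by rw [hh a c z, I1 a c z]; ring
    rw [e1, mul_comm (L z), mul_assoc, mul_inv_cancel₀ (hLne z), mul_one]
  -- I3, I4 : symmetry
  have I3 : ∀ a c z, g a c z = g c a z := by
    intro a c z
    rw [hg, hg]
    exact pd_comm hF2s a c z
  have I4 : ∀ a c z, h a c z = h c a z := by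
    intro a c z; rw [hh, hh, I3 a c z]; ring
  -- I5 : derivative of Lb
  have I5 : ∀ a z, pd a Lb z = e * pd a L z + b a z := by
    intro a z
    have e1 : pd a Lb = pd a (fun w => e * L w + β w) := by rw [hLb]
    rw [e1, pd_add a ((differentiable_const e).differentiableAt.fun_mul (dL z)) (hβs.differentiable (by simp) z),
      pd_const_mul a e (dL z), hβb a z]
  have dA : ∀ (a : Fin n) z, DifferentiableAt ℝ (fun w => e * pd a L w + b a w) z :=
    fun a z => ((differentiable_const e).differentiableAt.mul (dpL a z)).add (db a z)
  -- I6 : structure of gbar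
  have I6 : ∀ z, gbar i j z = (e * pd i L z + b i z) * (e * pd j L z + b j z)
      + (e + ρ) * (Lb z * (h i j z * (L z)⁻¹)) := by
    intro z
    have e0 : gbar i j z = pd i (fun w => Lb w * (e * pd j L w + b j w)) z := by
      rw [hgbar]
      rw [pd_congr i (f := pd j (fun w => Lb w ^ 2 / 2))
        (g := fun w => Lb w * (e * pd j L w + b j w))
        (fun w => by rw [hsq hLbs j w, I5 j w])]
    have e1 : pd i (fun w => Lb w * (e * pd j L w + b j w)) z
        = pd i Lb z * (e * pd j L z + b j z)
          + Lb z * pd i (fun w => e * pd j L w + b j w) z :=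
      pd_mul i (dLb z) (dA j z)
    have e2 : pd i (fun w => e * pd j L w + b j w) z
        = e * pd i (pd j L) z + pd i (b j) z := by
      rw [pd_add i ((differentiable_const e).differentiableAt.fun_mul (dpL j z)) (db j z),
        pd_const_mul i e (dpL j z)]
    rw [e0, e1, e2, I5 i z, I2 i j z, hb j i z, I4 j i z]
    field_simp
  -- main computation
  have dHL : ∀ z, DifferentiableAt ℝ (fun w => h i j w * (L w)⁻¹) z :=
    fun z => (dh i j z).mul (dLinv z)
  have E0 : Cbar i j k y = pd k (fun w => (e * pd i L w + b i w) * (e * pd j L w + b j w)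
      + (e + ρ) * (Lb w * (h i j w * (L w)⁻¹))) y / 2 := by
    rw [hCbar, pd_congr k (fun w => I6 w)]
  have E1 : pd k (fun w => (e * pd i L w + b i w) * (e * pd j L w + b j w)
        + (e + ρ) * (Lb w * (h i j w * (L w)⁻¹))) y
      = pd k (fun w => (e * pd i L w + b i w) * (e * pd j L w + b j w)) y
        + pd k (fun w => (e + ρ) * (Lb w * (h i j w * (L w)⁻¹))) y :=
    pd_add k ((dA i y).mul (dA j y))
      ((differentiable_const (e + ρ)).differentiableAt.mul ((dLb y).mul (dHL y)))
  have E2 : pd k (fun w => (e * pd i L w + b i w) * (e * pd j L w + b j w)) y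
      = pd k (fun w => e * pd i L w + b i w) y * (e * pd j L y + b j y)
        + (e * pd i L y + b i y) * pd k (fun w => e * pd j L w + b j w) y :=
    pd_mul k (dA i y) (dA j y)
  have E3 : ∀ a, pd k (fun w => e * pd a L w + b a w) y
      = e * (h k a y * (L y)⁻¹) + ρ / L y * h a k y := by
    intro a
    rw [pd_add k ((differentiable_const e).differentiableAt.fun_mul (dpL a y)) (db a y),
      pd_const_mul k e (dpL a y), I2 k a y, hb a k y]
  have E4 : pd k (fun w => (e + ρ) * (Lb w * (h i j w * (L w)⁻¹))) y
      = (e + ρ) * pd k (fun w => Lb w * (h i j w * (L w)⁻¹)) y :=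
    pd_const_mul k (e + ρ) ((dLb y).mul (dHL y))
  have E5 : pd k (fun w => Lb w * (h i j w * (L w)⁻¹)) y
      = pd k Lb y * (h i j y * (L y)⁻¹)
        + Lb y * pd k (fun w => h i j w * (L w)⁻¹) y :=
    pd_mul k (dLb y) (dHL y)
  have E6 : pd k (fun w => h i j w * (L w)⁻¹) y
      = pd k (h i j) y * (L y)⁻¹ + h i j y * (-(pd k L y) / L y ^ 2) := by
    rw [pd_mul k (dh i j y) (dLinv y), pd_inv k (dL y) (hLne y)]
  have hgC : pd k (g i j) y = 2 * C i j k y := by rw [hC]; ring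
  have E7 : pd k (h i j) y = 2 * C i j k y
      - (h k i y * (L y)⁻¹ * pd j L y + pd i L y * (h k j y * (L y)⁻¹)) := by
    have e1 : pd k (h i j) y = pd k (g i j) y
        - (pd k (pd i L) y * pd j L y + pd i L y * pd k (pd j L) y) := by
      rw [pd_congr k (fun w => hh i j w),
        pd_sub k (dg i j y) ((dpL i y).fun_mul (dpL j y)),
        pd_mul k (dpL i y) (dpL j y)]
    rw [e1, I2 k i y, I2 k j y, hgC]
  rw [E0, E1, E2, E3 i, E3 j, E4, E5, E6, E7, I5 k y, hφ y, hm i y, hm j y, hm k y]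
  simp only [hLb]
  rw [I4 i k y, I4 k j y]
  have h0 : L y ≠ 0 := hLne y
  field_simp
  ring
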